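/- Let E be a real inner product space and let F : E → ℝ be differentiable and L-smooth, and let F* ∈ ℝ satisfy F* ≤ F(w) for all w ∈ E. Fix real parameters with 0 < L, 0 ≤ α < 1, ψ > 0, ρ > 0, γ > 0, 0 < η ≤ 1/(4L), and γ ≤ ρ/(L·ψ·(1−α)). Let w⁰ ∈ E and for each t = 0, 1, …, T−1 define w^{t+½} = wᵗ − η∇F(wᵗ) and w^{t+1} = w^{t+½} + (1−α)·uᵗ, where uᵗ ∈ E satisfies ‖uᵗ‖ ≤ γψ, and assume ‖w^{t+½}‖ ≤ ψ and ‖∇F(wᵗ)‖ ≤ ρ for all t. Then for T ≥ 1, (1/T)·Σ_{t=0}^{T−1} ‖∇F(wᵗ)‖² ≤ 2(F(w⁰) − F*)/(ηT) + 4γρψ(1−α)/η. -/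

import Mathlib

/-!
Smoothness gives the descent lemma `F y ≤ F x + ⟪∇F x, y - x⟫ + L/2 ‖y - x‖²`. Applied to the
perturbed step `y = x - η ∇F x + e` with `L η ≤ 1/4`, it makes `F` drop by at least
`η/2 ‖∇F x‖²` up to an error `‖∇F x‖ ‖e‖ + L ‖e‖²`, which for `e = (1 - α) u` is at most
`2 γ ρ ψ (1 - α)` because `γ ≤ ρ / (L ψ (1 - α))`. Summing these steps telescopes, and `F ≥ F*`
bounds what remains.
-/

open RealInnerProductSpace

section Smooth

variable {E : Type*} [NormedAddCommGroup E] [InnerProductSpace ℝ E] {F : E → ℝ} {F' : E → E}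
  {L : ℝ}

theorem descent_lemma
    (hdiff : ∀ x, HasFDerivAt F (InnerProductSpace.toDualMap ℝ E (F' x) : E →L[ℝ] ℝ) x)
    (hsmooth : ∀ x y, ‖F' x - F' y‖ ≤ L * ‖x - y‖) (x y : E) :
    F y ≤ F x + ⟪F' x, y - x⟫ + L / 2 * ‖y - x‖ ^ 2 := by
  set v := y - x
  -- `φ` is antitone on `[0, 1]`, and `φ 1 ≤ φ 0` is the claim.
  set φ : ℝ → ℝ := fun t => F (x + t • v) - t * ⟪F' x, v⟫ - L / 2 * t ^ 2 * ‖v‖ ^ 2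
  have hφ' : ∀ t : ℝ,
      HasDerivAt φ (⟪F' (x + t • v) - F' x, v⟫ - L * t * ‖v‖ ^ 2) t := by
    intro t
    have hline : HasDerivAt (fun s : ℝ => x + s • v) v t := by
      simpa using ((hasDerivAt_id t).smul_const v).const_add x
    have hF : HasDerivAt (fun s : ℝ => F (x + s • v)) ⟪F' (x + t • v), v⟫ t := by
      have := (hdiff (x + t • v)).comp_hasDerivAt t hline
      simp only [InnerProductSpace.toDualMap_apply_apply] at this
      exact this
    have hlin : HasDerivAt (fun s : ℝ => s * ⟪F' x, v⟫) ⟪F' x, v⟫ t := by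
      simpa using (hasDerivAt_id t).mul_const ⟪F' x, v⟫
    have hquad : HasDerivAt (fun s : ℝ => L / 2 * s ^ 2 * ‖v‖ ^ 2) (L * t * ‖v‖ ^ 2) t :=
      (((hasDerivAt_pow 2 t).const_mul (L / 2)).mul_const (‖v‖ ^ 2)).congr_deriv (by ring)
    rw [inner_sub_left]
    exact (hF.sub hlin).sub hquad
  have hanti : AntitoneOn φ (Set.Icc 0 1) := by
    refine antitoneOn_of_hasDerivWithinAt_nonpos (convex_Icc 0 1)
      (fun t _ => (hφ' t).continuousAt.continuousWithinAt)
      (fun t _ => (hφ' t).hasDerivWithinAt) fun t ht => ?_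
    rw [interior_Icc] at ht
    have hinner : ⟪F' (x + t • v) - F' x, v⟫ ≤ L * t * ‖v‖ ^ 2 :=
      calc ⟪F' (x + t • v) - F' x, v⟫ ≤ ‖F' (x + t • v) - F' x‖ * ‖v‖ := real_inner_le_norm _ _
        _ ≤ L * ‖(x + t • v) - x‖ * ‖v‖ := by gcongr; exact hsmooth _ _
        _ = L * t * ‖v‖ ^ 2 := by
          rw [add_sub_cancel_left, norm_smul, Real.norm_of_nonneg ht.1.le]; ring
    linarith
  have h10 := hanti (Set.left_mem_Icc.2 zero_le_one) (Set.right_mem_Icc.2 zero_le_one) zero_le_one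
  norm_num [φ, v] at h10
  linarith

theorem descent_of_perturbed_gradient_step
    (hdiff : ∀ x, HasFDerivAt F (InnerProductSpace.toDualMap ℝ E (F' x) : E →L[ℝ] ℝ) x)
    (hsmooth : ∀ x y, ‖F' x - F' y‖ ≤ L * ‖x - y‖) (hL : 0 ≤ L) {η : ℝ} (hη0 : 0 ≤ η)
    (hLη : L * η ≤ 1 / 4) (x e : E) :
    F (x - η • F' x + e) ≤
      F x - η / 2 * ‖F' x‖ ^ 2 + ‖F' x‖ * ‖e‖ + L * ‖e‖ ^ 2 := by
  set g := F' x
  have hstep : x - η • g + e - x = e - η • g := by abel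
  have hinner : ⟪g, e - η • g⟫ ≤ ‖g‖ * ‖e‖ - η * ‖g‖ ^ 2 := by
    rw [inner_sub_right, real_inner_smul_right, real_inner_self_eq_norm_sq]
    linarith [real_inner_le_norm g e]
  have hnorm : ‖e - η • g‖ ^ 2 ≤ 2 * ‖e‖ ^ 2 + 2 * η ^ 2 * ‖g‖ ^ 2 := by
    have htri : ‖e - η • g‖ ≤ ‖e‖ + η * ‖g‖ := by
      simpa [norm_smul, Real.norm_of_nonneg hη0] using norm_sub_le e (η • g)
    nlinarith [norm_nonneg (e - η • g), sq_nonneg (‖e‖ - η * ‖g‖)]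
  have hLη2 : L * η ^ 2 * ‖g‖ ^ 2 ≤ η / 4 * ‖g‖ ^ 2 := by
    have : L * η ^ 2 ≤ η / 4 := by nlinarith
    exact mul_le_mul_of_nonneg_right this (sq_nonneg _)
  have := descent_lemma hdiff hsmooth x (x - η • g + e)
  rw [hstep] at this
  nlinarith [mul_le_mul_of_nonneg_left hnorm hL, sq_nonneg ‖g‖]

theorem descent_of_perturbed_gradient_step_of_norm_le
    (hdiff : ∀ x, HasFDerivAt F (InnerProductSpace.toDualMap ℝ E (F' x) : E →L[ℝ] ℝ) x)
    (hsmooth : ∀ x y, ‖F' x - F' y‖ ≤ L * ‖x - y‖) (hL : 0 ≤ L) {η ρ r : ℝ} (hη0 : 0 ≤ η)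
    (hLη : L * η ≤ 1 / 4) (hLr : L * r ≤ ρ) {x e : E} (hg : ‖F' x‖ ≤ ρ) (he : ‖e‖ ≤ r) :
    F (x - η • F' x + e) ≤ F x - η / 2 * ‖F' x‖ ^ 2 + 2 * (ρ * r) := by
  have hρ0 : 0 ≤ ρ := (norm_nonneg _).trans hg
  have hcross : ‖F' x‖ * ‖e‖ ≤ ρ * r := mul_le_mul hg he (norm_nonneg _) hρ0
  have hsq : L * ‖e‖ ^ 2 ≤ ρ * r :=
    calc L * ‖e‖ ^ 2 = ‖e‖ * (L * ‖e‖) := by ring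
      _ ≤ ‖e‖ * ρ := by gcongr; exact (mul_le_mul_of_nonneg_left he hL).trans hLr
      _ ≤ ρ * r := by rw [mul_comm]; exact mul_le_mul_of_nonneg_left he hρ0
  linarith [descent_of_perturbed_gradient_step hdiff hsmooth hL hη0 hLη x e]

end Smooth

theorem avg_le_of_descent {f a : ℕ → ℝ} {η C m : ℝ} (hη : 0 < η) {T : ℕ} (hT : 1 ≤ T)
    (hdesc : ∀ t < T, f (t + 1) ≤ f t - η / 2 * a t + C) (hm : m ≤ f T) :
    (1 / (T : ℝ)) * ∑ t ∈ Finset.range T, a t ≤ 2 * (f 0 - m) / (η * T) + 2 * C / η := by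
  have htel : η / 2 * ∑ t ∈ Finset.range T, a t ≤ f 0 - f T + T * C := by
    have := Finset.sum_le_sum fun t ht =>
      show η / 2 * a t ≤ f t - f (t + 1) + C by linarith [hdesc t (Finset.mem_range.mp ht)]
    rwa [← Finset.mul_sum, Finset.sum_add_distrib, Finset.sum_range_sub', Finset.sum_const,
      Finset.card_range, nsmul_eq_mul] at this
  have hTpos : (0 : ℝ) < T := by exact_mod_cast hT
  rw [div_add_div _ _ (by positivity) hη.ne', le_div_iff₀ (by positivity)]
  field_simp
  nlinarith

theorem balance_nonconvex_deterministic_general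
    {E : Type*} [NormedAddCommGroup E] [InnerProductSpace ℝ E]
    {F : E → ℝ} {F' : E → E}
    (hdiff : ∀ x, HasFDerivAt F (InnerProductSpace.toDualMap ℝ E (F' x) : E →L[ℝ] ℝ) x)
    {L α ψ ρ γ η Fstar : ℝ}
    (hsmooth : ∀ x y, ‖F' x - F' y‖ ≤ L * ‖x - y‖)
    (hlb : ∀ x, Fstar ≤ F x)
    (hL : 0 < L) (hα1 : α < 1)
    (hψ : 0 < ψ)
    (hη0 : 0 < η) (hη : η ≤ 1 / (4 * L))
    (hγle : γ ≤ ρ / (L * ψ * (1 - α)))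
    {T : ℕ} (hT : 1 ≤ T) (w : ℕ → E) (u : ℕ → E)
    (hupdate : ∀ t < T, w (t + 1) = (w t - η • F' (w t)) + (1 - α) • u t)
    (hu : ∀ t < T, ‖u t‖ ≤ γ * ψ)
    (hρbd : ∀ t < T, ‖F' (w t)‖ ≤ ρ) :
    (1 / (T : ℝ)) * ∑ t ∈ Finset.range T, ‖F' (w t)‖ ^ 2 ≤
      2 * (F (w 0) - Fstar) / (η * T) + 4 * γ * ρ * ψ * (1 - α) / η := by
  have hα : 0 < 1 - α := by linarith
  have hLη : L * η ≤ 1 / 4 := by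
    have := (le_div_iff₀ (by positivity)).mp hη; linarith
  have hLr : L * ((1 - α) * (γ * ψ)) ≤ ρ := by
    have := (le_div_iff₀ (by positivity)).mp hγle; linarith
  have hstep : ∀ t < T, F (w (t + 1)) ≤
      F (w t) - η / 2 * ‖F' (w t)‖ ^ 2 + 2 * (ρ * ((1 - α) * (γ * ψ))) := by
    intro t ht
    have he : ‖(1 - α) • u t‖ ≤ (1 - α) * (γ * ψ) := by
      rw [norm_smul, Real.norm_of_nonneg hα.le]; exact mul_le_mul_of_nonneg_left (hu t ht) hα.le
    rw [hupdate t ht]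
    exact descent_of_perturbed_gradient_step_of_norm_le hdiff hsmooth hL.le hη0.le hLη hLr
      (hρbd t ht) he
  have := avg_le_of_descent (f := fun t => F (w t)) hη0 hT hstep (hlb (w T))
  convert this using 2; ring

/-- Deterministic (exact-gradient) core of Theorem 2: BALANCE with L-smooth
objective drives the average squared gradient norm to a neighborhood of zero. -/
theorem balance_nonconvex_deterministic
    {E : Type*} [NormedAddCommGroup E] [InnerProductSpace ℝ E]
    {F : E → ℝ} {F' : E → E}
    (hdiff : ∀ x, HasFDerivAt F (InnerProductSpace.toDualMap ℝ E (F' x) : E →L[ℝ] ℝ) x)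
    {L α ψ ρ γ η Fstar : ℝ}
    (hsmooth : ∀ x y, ‖F' x - F' y‖ ≤ L * ‖x - y‖)
    (hlb : ∀ x, Fstar ≤ F x)
    (hL : 0 < L) (hα0 : 0 ≤ α) (hα1 : α < 1)
    (hψ : 0 < ψ) (hρ : 0 < ρ) (hγ : 0 < γ)
    (hη0 : 0 < η) (hη : η ≤ 1 / (4 * L))
    (hγle : γ ≤ ρ / (L * ψ * (1 - α)))
    {T : ℕ} (hT : 1 ≤ T) (w : ℕ → E) (u : ℕ → E)
    (hupdate : ∀ t < T, w (t + 1) = (w t - η • F' (w t)) + (1 - α) • u t)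
    (hu : ∀ t < T, ‖u t‖ ≤ γ * ψ)
    (hψbd : ∀ t < T, ‖w t - η • F' (w t)‖ ≤ ψ)
    (hρbd : ∀ t < T, ‖F' (w t)‖ ≤ ρ) :
    (1 / (T : ℝ)) * ∑ t ∈ Finset.range T, ‖F' (w t)‖ ^ 2 ≤
      2 * (F (w 0) - Fstar) / (η * T) + 4 * γ * ρ * ψ * (1 - α) / η :=
  balance_nonconvex_deterministic_general hdiff hsmooth hlb hL hα1 hψ hη0 hη hγle hT w u hupdate hu
    hρbd
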